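/- arXiv:2605.16601 — 3 statements merged into one kernel-verified Lean document; each statement's English description precedes it below -/
import Mathlib

section
/- For every integer n > 2, there exists a unique real ζ_n > 1 such that there exists a sequence ε_1,…,ε_n satisfying the recurrence (★) for all j = 1,…,n−1 together with 0 ≤ ε_n < ε_{n−1} < … < ε_2 < ε_1 = 1 and ζ_n = n / (ε_n·P_n'(1−ε_n) + P_n(1−ε_n)). -/
/-!
Write `t_j = 1 - ε_j` and `u = 1/ζ`. With `Q_n(t) = t P_n'(t) - P_n(t)`, (★) becomes
`Q_n(t_{j+1}) = P_n'(t_j) - j u` and the formula for `ζ` becomes `R_n(t_n) = n u`, where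
`R_n = P_n' - Q_n`. Both `Q_n` (on `[0, ∞)`) and `R_n` (on `[0, 1]`, its derivative being
`(1 - t) P_n''(t)`) are strictly increasing.

Uniqueness: a larger `u` makes every `t_j` smaller, hence `R_n(t_n)` smaller while `n u` grows.

Existence: run the recurrence for every `u`, clamping `t_{j+1}` to `[t_j, 1]`. The clamped `t_n`
depends continuously on `u`, and `R_n(t_n) - n u` is positive at `u = 0` and negative at `u = 1`.
At a zero no clamp is active: a lower clamp at step `k` freezes the sequence, giving
`R_n(t_n) = R_n(t_k) ≤ k u < n u`, and an upper clamp forces `t_n = 1`, i.e. `n = n u`.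
-/

open Finset

/-- `P_n(t) = ∑_{i=1}^n t^i`. -/
noncomputable def Pn (n : ℕ) (t : ℝ) : ℝ := ∑ i ∈ Finset.Icc 1 n, t ^ i

/-- `P_n'(t) = ∑_{i=1}^n i t^{i-1}`. -/
noncomputable def Pn' (n : ℕ) (t : ℝ) : ℝ := ∑ i ∈ Finset.Icc 1 n, (i : ℝ) * t ^ (i - 1)

/-- The recurrence (★): for `j = 1, …, n-1`,
`P_n'(1-ε_{j+1}) - P_n'(1-ε_j) = ε_{j+1} P_n'(1-ε_{j+1}) + P_n(1-ε_{j+1}) - j/ζ`. -/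
def Recurrence (n : ℕ) (ζ : ℝ) (ε : ℕ → ℝ) : Prop :=
  ∀ j, 1 ≤ j → j ≤ n - 1 →
    Pn' n (1 - ε (j+1)) - Pn' n (1 - ε j)
      = ε (j+1) * Pn' n (1 - ε (j+1)) + Pn n (1 - ε (j+1)) - (j : ℝ) / ζ

open Filter

theorem exists_orderIso_eqOn_Icc {f : ℝ → ℝ} {a b : ℝ} (hab : a ≤ b)
    (hcont : ContinuousOn f (Set.Icc a b)) (hmono : StrictMonoOn f (Set.Icc a b)) :
    ∃ e : ℝ ≃o ℝ, Set.EqOn e f (Set.Icc a b) := by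
  set c : ℝ → ℝ := fun t => max a (min b t) with hc_def
  have hc : ∀ t, c t ∈ Set.Icc a b := fun t =>
    ⟨le_max_left _ _, max_le hab (min_le_left _ _)⟩
  have hc_lip : ∀ s t, s ≤ t → c s ≤ c t ∧ c t - c s ≤ t - s := by
    intro s t hst
    simp only [hc_def]
    constructor
    · exact max_le_max le_rfl (min_le_min le_rfl hst)
    · grind
  -- `f` continued outside `[a, b]` by lines of slope one
  set G : ℝ → ℝ := fun t => f (c t) + (t - c t) with hG_def
  have hG : StrictMono G := by
    intro s t hst
    obtain ⟨hle, hlip⟩ := hc_lip s t hst.le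
    rcases hle.lt_or_eq with h | h
    · linarith [hmono (hc s) (hc t) h]
    · simp only [hG_def, h]; linarith
  have hGc : Continuous G := (hcont.comp_continuous (by fun_prop) hc).add (by fun_prop)
  have htop : Tendsto G atTop atTop := by
    refine (tendsto_atTop_add_const_right _ (f b - b) tendsto_id).congr' ?_
    filter_upwards [eventually_ge_atTop b] with t ht
    simp only [hG_def, hc_def, min_eq_left ht, max_eq_right hab, id]
    ring
  have hbot : Tendsto G atBot atBot := by
    refine (tendsto_atBot_add_const_right _ (f a - a) tendsto_id).congr' ?_
    filter_upwards [eventually_le_atBot a] with t ht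
    simp only [hG_def, hc_def, min_eq_right (ht.trans hab), max_eq_left ht, id]
    ring
  refine ⟨StrictMono.orderIsoOfSurjective G hG (hGc.surjective htop hbot), fun t ht => ?_⟩
  simp [hG_def, hc_def, min_eq_right ht.2, max_eq_right ht.1]

noncomputable def Qn (n : ℕ) (t : ℝ) : ℝ := ∑ i ∈ Finset.Icc 1 n, ((i : ℝ) - 1) * t ^ i

noncomputable def Pn'' (n : ℕ) (t : ℝ) : ℝ :=
  ∑ i ∈ Finset.Icc 1 n, (i : ℝ) * ((i - 1 : ℕ) * t ^ (i - 1 - 1))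

theorem Qn_eq (n : ℕ) (t : ℝ) : Qn n t = t * Pn' n t - Pn n t := by
  rw [Qn, Pn', Pn, Finset.mul_sum, ← Finset.sum_sub_distrib]
  refine Finset.sum_congr rfl fun i hi => ?_
  obtain ⟨i, rfl⟩ := Nat.exists_eq_add_of_le' (Finset.mem_Icc.mp hi).1
  simp only [Nat.add_sub_cancel, pow_succ]
  push_cast
  ring

theorem Pn'_zero {n : ℕ} (hn : 1 ≤ n) : Pn' n 0 = 1 := by
  rw [Pn', Finset.sum_eq_single_of_mem 1 (Finset.mem_Icc.mpr ⟨le_rfl, hn⟩)]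
  · norm_num
  · intro i hi hi1
    rw [zero_pow (by grind), mul_zero]

theorem Qn_zero (n : ℕ) : Qn n 0 = 0 :=
  Finset.sum_eq_zero fun i hi => by rw [zero_pow (by grind), mul_zero]

theorem Pn'_sub_Qn_zero {n : ℕ} (hn : 1 ≤ n) : Pn' n 0 - Qn n 0 = 1 := by
  rw [Pn'_zero hn, Qn_zero, sub_zero]

theorem Pn'_sub_Qn_one (n : ℕ) : Pn' n 1 - Qn n 1 = n := by
  simp [Pn', Qn, ← Finset.sum_sub_distrib]

theorem continuous_Pn' (n : ℕ) : Continuous (Pn' n) := by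
  unfold Pn'; fun_prop

theorem continuous_Qn (n : ℕ) : Continuous (Qn n) := by
  unfold Qn; fun_prop

theorem monotoneOn_Pn' (n : ℕ) : MonotoneOn (Pn' n) (Set.Ici 0) := fun s hs t _ hst =>
  Finset.sum_le_sum fun i _ => by gcongr

theorem strictMonoOn_Qn {n : ℕ} (hn : 2 ≤ n) : StrictMonoOn (Qn n) (Set.Ici 0) := by
  intro s hs t _ hst
  refine Finset.sum_lt_sum (fun i hi => ?_) ⟨2, Finset.mem_Icc.mpr ⟨by omega, hn⟩, ?_⟩
  · have : (1 : ℝ) ≤ i := by exact_mod_cast (Finset.mem_Icc.mp hi).1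
    gcongr
  · norm_num
    exact pow_lt_pow_left₀ hst hs two_ne_zero

theorem hasDerivAt_Pn'_sub_Qn (n : ℕ) (t : ℝ) :
    HasDerivAt (fun t => Pn' n t - Qn n t) ((1 - t) * Pn'' n t) t := by
  have hP : HasDerivAt (Pn n) (Pn' n t) t := by
    unfold Pn Pn'
    exact HasDerivAt.fun_sum fun i _ => hasDerivAt_pow i t
  have hP' : HasDerivAt (Pn' n) (Pn'' n t) t := by
    unfold Pn' Pn''
    exact HasDerivAt.fun_sum fun i _ => (hasDerivAt_pow (i - 1) t).const_mul (i : ℝ)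
  simp_rw [Qn_eq]
  exact (hP'.fun_sub (((hasDerivAt_id' t).fun_mul hP').fun_sub hP)).congr_deriv (by ring)

theorem Pn''_pos {n : ℕ} (hn : 2 ≤ n) {t : ℝ} (ht : 0 ≤ t) : 0 < Pn'' n t :=
  Finset.sum_pos' (fun i _ => by positivity)
    ⟨2, Finset.mem_Icc.mpr ⟨by omega, hn⟩, by norm_num⟩

theorem strictMonoOn_Pn'_sub_Qn {n : ℕ} (hn : 2 ≤ n) :
    StrictMonoOn (fun t => Pn' n t - Qn n t) (Set.Icc 0 1) := by
  refine strictMonoOn_of_deriv_pos (convex_Icc 0 1)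
    ((continuous_Pn' n).sub (continuous_Qn n)).continuousOn fun t ht => ?_
  rw [interior_Icc] at ht
  rw [(hasDerivAt_Pn'_sub_Qn n t).deriv]
  exact mul_pos (by linarith [ht.2]) (Pn''_pos hn ht.1.le)

structure IsSolution (n : ℕ) (u : ℝ) (t : ℕ → ℝ) : Prop where
  one : t 1 = 0
  recurrence : ∀ k, 1 ≤ k → k < n → Qn n (t (k + 1)) = Pn' n (t k) - k * u
  lt_succ : ∀ k, 1 ≤ k → k < n → t k < t (k + 1)
  le_one : t n ≤ 1
  terminal : Pn' n (t n) - Qn n (t n) = n * u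

theorem recurrence_iff {n : ℕ} {ζ : ℝ} {ε : ℕ → ℝ} :
    Recurrence n ζ ε ↔
      ∀ k, 1 ≤ k → k < n → Qn n (1 - ε (k + 1)) = Pn' n (1 - ε k) - k * ζ⁻¹ := by
  refine forall_congr' fun k => imp_congr_right fun hk => ?_
  rw [Qn_eq, div_eq_mul_inv, show k ≤ n - 1 ↔ k < n by omega]
  exact imp_congr_right fun _ => by constructor <;> intro h <;> linarith

theorem isSolution_iff {n : ℕ} (hn : 0 < n) {ζ : ℝ} (hζ : ζ ≠ 0) {ε : ℕ → ℝ} :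
    (Recurrence n ζ ε ∧ ε 1 = 1 ∧ 0 ≤ ε n ∧
      (∀ j, 1 ≤ j → j < n → ε (j + 1) < ε j) ∧
      ζ = n / (ε n * Pn' n (1 - ε n) + Pn n (1 - ε n))) ↔
      IsSolution n ζ⁻¹ (fun j => 1 - ε j) := by
  have hterm : Pn' n (1 - ε n) - Qn n (1 - ε n) = ε n * Pn' n (1 - ε n) + Pn n (1 - ε n) := by
    rw [Qn_eq]; ring
  rw [recurrence_iff]
  constructor
  · rintro ⟨hrec, h1, hn0, hdec, hζeq⟩
    refine ⟨by simp [h1], hrec, fun j hj hjn => by linarith [hdec j hj hjn], by linarith, ?_⟩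
    have hD : ε n * Pn' n (1 - ε n) + Pn n (1 - ε n) ≠ 0 := fun hD => by
      rw [hD, div_zero] at hζeq
      exact hζ hζeq
    rw [hterm, hζeq]
    field_simp
  · rintro ⟨h1, hrec, hinc, hle, hterm'⟩
    refine ⟨hrec, by linarith, by linarith, fun j hj hjn => by linarith [hinc j hj hjn], ?_⟩
    rw [← hterm, hterm']
    field_simp

theorem IsSolution.nonneg {n : ℕ} {u : ℝ} {t : ℕ → ℝ} (h : IsSolution n u t) :
    ∀ k, 1 ≤ k → k ≤ n → 0 ≤ t k := by
  intro k hk hkn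
  induction k, hk using Nat.le_induction with
  | base => exact h.one.ge
  | succ k hk ih => exact (ih (by omega)).trans (h.lt_succ k hk (by omega)).le

theorem IsSolution.lt_succ_of_le {n : ℕ} (hn : 2 ≤ n) {u u' : ℝ} {t t' : ℕ → ℝ}
    (h : IsSolution n u t) (h' : IsSolution n u' t') (hu : u' < u) {k : ℕ} (hk : 1 ≤ k)
    (hkn : k < n) (hle : t k ≤ t' k) : t (k + 1) < t' (k + 1) := by
  have hQ : Qn n (t (k + 1)) < Qn n (t' (k + 1)) := by
    rw [h.recurrence k hk hkn, h'.recurrence k hk hkn]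
    have hP := monotoneOn_Pn' n (h.nonneg k hk hkn.le) (h'.nonneg k hk hkn.le) hle
    have hk' : (1 : ℝ) ≤ k := by exact_mod_cast hk
    nlinarith
  exact (strictMonoOn_Qn hn).lt_iff_lt (h.nonneg _ (by omega) hkn) (h'.nonneg _ (by omega) hkn)
    |>.mp hQ

theorem IsSolution.le {n : ℕ} (hn : 2 ≤ n) {u u' : ℝ} {t t' : ℕ → ℝ}
    (h : IsSolution n u t) (h' : IsSolution n u' t') : u ≤ u' := by
  by_contra! hu
  have hle : ∀ k, 1 ≤ k → k ≤ n → t k ≤ t' k := by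
    intro k hk hkn
    induction k, hk using Nat.le_induction with
    | base => rw [h.one, h'.one]
    | succ k hk ih => exact (h.lt_succ_of_le hn h' hu hk (by omega) (ih (by omega))).le
  have hlt : t n < t' n := by
    obtain ⟨m, rfl⟩ : ∃ m, n = m + 1 := ⟨n - 1, by omega⟩
    exact h.lt_succ_of_le hn h' hu (by omega) (by omega) (hle m (by omega) (by omega))
  have := (strictMonoOn_Pn'_sub_Qn hn) ⟨h.nonneg n (by omega) le_rfl, h.le_one⟩
    ⟨h'.nonneg n (by omega) le_rfl, h'.le_one⟩ hlt
  simp only [h.terminal, h'.terminal] at this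
  have : (0 : ℝ) < n := by positivity
  nlinarith

theorem IsSolution.unique {n : ℕ} (hn : 2 ≤ n) {u u' : ℝ} {t t' : ℕ → ℝ}
    (h : IsSolution n u t) (h' : IsSolution n u' t') : u = u' :=
  le_antisymm (h.le hn h') (h'.le hn h)

-- `e` is meant to agree with `Qn n` on `[0, 1]`, so that `e.symm` inverts it there.
noncomputable def orbit (e : ℝ ≃o ℝ) (n : ℕ) (u : ℝ) : ℕ → ℝ
  | 0 => 0
  | 1 => 0
  | k + 2 => min 1 (max (orbit e n u (k + 1))
      (e.symm (Pn' n (orbit e n u (k + 1)) - (k + 1 : ℕ) * u)))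

section orbit

variable {e : ℝ ≃o ℝ} {n : ℕ} {u : ℝ}

theorem orbit_succ {k : ℕ} (hk : 1 ≤ k) :
    orbit e n u (k + 1) =
      min 1 (max (orbit e n u k) (e.symm (Pn' n (orbit e n u k) - k * u))) := by
  obtain ⟨k, rfl⟩ := Nat.exists_eq_add_of_le' hk
  rfl

theorem orbit_mem_Icc (k : ℕ) : orbit e n u k ∈ Set.Icc 0 1 := by
  induction k using orbit.induct with
  | case1 | case2 => simp [orbit]
  | case3 k ih =>
    rw [orbit]
    exact ⟨le_min zero_le_one (ih.1.trans (le_max_left _ _)), min_le_left _ _⟩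

theorem monotone_orbit : Monotone (orbit e n u) := by
  refine monotone_nat_of_le_succ fun k => ?_
  rcases Nat.eq_zero_or_pos k with rfl | hk
  · simp [orbit]
  · rw [orbit_succ hk]
    exact le_min (orbit_mem_Icc k).2 (le_max_left _ _)

theorem continuous_orbit (k : ℕ) : Continuous fun u => orbit e n u k := by
  induction k using orbit.induct with
  | case1 | case2 => simp only [orbit]; exact continuous_const
  | case3 k ih =>
    simp only [orbit]
    have := e.symm.continuous
    have := continuous_Pn' n
    fun_prop

theorem orbit_one_eq_zero (he : Set.EqOn e (Qn n) (Set.Icc 0 1)) (hn : 1 ≤ n) (k : ℕ) :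
    orbit e n 1 k = 0 := by
  induction k using orbit.induct with
  | case1 | case2 => rfl
  | case3 k ih =>
    rw [orbit, ih, Pn'_zero hn, max_eq_left, min_eq_right zero_le_one]
    rw [OrderIso.symm_apply_le, he ⟨le_rfl, zero_le_one⟩, Qn_zero]
    push_cast
    linarith [(k.cast_nonneg : (0 : ℝ) ≤ k)]

theorem orbit_eq_of_stall (he : Set.EqOn e (Qn n) (Set.Icc 0 1)) (hu : 0 ≤ u)
    {k : ℕ} (hk : 1 ≤ k)
    (hstall : Pn' n (orbit e n u k) - Qn n (orbit e n u k) ≤ k * u) :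
    ∀ m, k ≤ m → orbit e n u m = orbit e n u k := by
  intro m hm
  induction m, hm using Nat.le_induction with
  | base => rfl
  | succ m hm ih =>
    have hkm : (k : ℝ) * u ≤ m * u := by gcongr
    rw [orbit_succ (hk.trans hm), ih, max_eq_left, min_eq_right (orbit_mem_Icc k).2]
    rw [OrderIso.symm_apply_le, he (orbit_mem_Icc k)]
    linarith

theorem exists_root_orbit (he : Set.EqOn e (Qn n) (Set.Icc 0 1)) (hn : 2 ≤ n) :
    ∃ u, 0 < u ∧ u < 1 ∧ Pn' n (orbit e n u n) - Qn n (orbit e n u n) = n * u := by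
  set Φ : ℝ → ℝ := fun u => Pn' n (orbit e n u n) - Qn n (orbit e n u n) - n * u with hΦ
  have hΦc : Continuous Φ := by
    have := continuous_Pn' n
    have := continuous_Qn n
    have := continuous_orbit (e := e) (n := n) n
    fun_prop
  have hΦ0 : 0 < Φ 0 := by
    have hmem := orbit_mem_Icc (e := e) (n := n) (u := 0) n
    have := (strictMonoOn_Pn'_sub_Qn hn).monotoneOn ⟨le_rfl, zero_le_one⟩ hmem hmem.1
    simp only [hΦ, Pn'_sub_Qn_zero (by omega : 1 ≤ n)] at this ⊢
    linarith
  have hΦ1 : Φ 1 < 0 := by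
    have : (2 : ℝ) ≤ n := by exact_mod_cast hn
    simp only [hΦ, orbit_one_eq_zero he (by omega), Pn'_sub_Qn_zero (by omega : 1 ≤ n)]
    linarith
  obtain ⟨u, ⟨hu0, hu1⟩, hroot⟩ :=
    intermediate_value_Ioo' zero_le_one hΦc.continuousOn ⟨hΦ1, hΦ0⟩
  exact ⟨u, hu0, hu1, sub_eq_zero.mp hroot⟩

theorem isSolution_orbit (he : Set.EqOn e (Qn n) (Set.Icc 0 1)) (hu0 : 0 < u) (hu1 : u < 1)
    (hroot : Pn' n (orbit e n u n) - Qn n (orbit e n u n) = n * u) :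
    IsSolution n u (orbit e n u) := by
  have hinside : ∀ k, 1 ≤ k → k < n →
      orbit e n u k < e.symm (Pn' n (orbit e n u k) - k * u) ∧
      e.symm (Pn' n (orbit e n u k) - k * u) < 1 := by
    intro k hk hkn
    constructor
    · by_contra! hstall
      rw [OrderIso.symm_apply_le, he (orbit_mem_Icc k)] at hstall
      have hkn' : (k : ℝ) < n := by exact_mod_cast hkn
      rw [orbit_eq_of_stall he hu0.le hk (by linarith) n hkn.le] at hroot
      nlinarith
    · by_contra! htop
      have h1 : orbit e n u (k + 1) = 1 := by
        rw [orbit_succ hk]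
        exact min_eq_left (le_max_of_le_right htop)
      have hn1 : orbit e n u n = 1 :=
        le_antisymm (orbit_mem_Icc n).2 (h1 ▸ monotone_orbit (by omega : k + 1 ≤ n))
      rw [hn1, Pn'_sub_Qn_one] at hroot
      have : (0 : ℝ) < n := by exact_mod_cast (by omega : 0 < n)
      nlinarith
  have hstep : ∀ k, 1 ≤ k → k < n →
      orbit e n u (k + 1) = e.symm (Pn' n (orbit e n u k) - k * u) := fun k hk hkn => by
    rw [orbit_succ hk, max_eq_right (hinside k hk hkn).1.le, min_eq_right (hinside k hk hkn).2.le]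
  refine ⟨rfl, fun k hk hkn => ?_, fun k hk hkn => ?_, (orbit_mem_Icc n).2, hroot⟩
  · rw [← he (orbit_mem_Icc (k + 1)), hstep k hk hkn, OrderIso.apply_symm_apply]
  · rw [hstep k hk hkn]
    exact (hinside k hk hkn).1

end orbit

theorem exists_isSolution {n : ℕ} (hn : 2 ≤ n) :
    ∃ u, 0 < u ∧ u < 1 ∧ ∃ t, IsSolution n u t := by
  obtain ⟨e, he⟩ := exists_orderIso_eqOn_Icc zero_le_one (continuous_Qn n).continuousOn
    ((strictMonoOn_Qn hn).mono Set.Icc_subset_Ici_self)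
  obtain ⟨u, hu0, hu1, hroot⟩ := exists_root_orbit he hn
  exact ⟨u, hu0, hu1, _, isSolution_orbit he hu0 hu1 hroot⟩

/-- For every integer `n > 2` there is a unique `ζ_n > 1` admitting a
solution `ε_1, …, ε_n` of (★) with `0 ≤ ε_n < ε_{n-1} < … < ε_2 < ε_1 = 1` and
`ζ_n = n / (ε_n P_n'(1-ε_n) + P_n(1-ε_n))`. -/
theorem stmt_4 (n : ℕ) (hn : 2 < n) :
    ∃! ζ : ℝ, 1 < ζ ∧ ∃ ε : ℕ → ℝ,
      Recurrence n ζ ε ∧ ε 1 = 1 ∧ 0 ≤ ε n ∧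
      (∀ j, 1 ≤ j → j < n → ε (j+1) < ε j) ∧
      ζ = (n : ℝ) / (ε n * Pn' n (1 - ε n) + Pn n (1 - ε n)) := by
  obtain ⟨u, hu0, hu1, t, ht⟩ := exists_isSolution hn.le
  have hn0 : 0 < n := by omega
  refine ⟨u⁻¹, ⟨one_lt_inv₀ hu0 |>.mpr hu1, fun j => 1 - t j, ?_⟩, ?_⟩
  · rw [isSolution_iff hn0 (inv_ne_zero hu0.ne'), inv_inv]
    simpa only [sub_sub_cancel] using ht
  · rintro ζ ⟨hζ, ε, hε⟩
    rw [isSolution_iff hn0 (by positivity)] at hε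
    rw [← inv_inv ζ, hε.unique hn.le ht]
end

section
/- Fix integers n ≥ 1 and j ≥ 2, and reals q > 1, a > 0, 0 < β < 1, p̃ ∈ (0,1). Set ρ_l = l + 2 − a/q; ψ_l(v) = min{β(q−1)/q^{l+1}, β/q^l − v} for l = 0,…,j−1 and ψ_j(v) = β/q^j − v; and ψ_fail(v) = min{1−β, 1−v}. Let r:[0,1]→[0,∞) be integrable and set C̃(k) = (q^k/β)·Σ_{l=k}^j (a·q^l + ρ_l)·∫_0^{β/q^l} r(v)·ψ_l(v) dv for k = 0,…,j. Suppose d_0,…,d_{j+1} ≥ 0 satisfy: d_0 ≤ (1/β)·∫_0^1 r(v)·ψ_fail(v) dv + C̃(0) + Σ_{l=1}^j ((q−1)/q^l)·d_l + (1/q^j)·d_{j+1}; d_k ≤ (1−p̃)·d_{k−1} + p̃·(C̃(k) + Σ_{l=1}^{j−k} ((q−1)/q^l)·d_{k+l} + (1/q^{j−k})·d_{j+1}) for k = 1,…,j−1; d_j ≤ (1−p̃)·d_{j−1} + p̃·(C̃(j) + d_{j+1}); d_{j+1} ≤ 0; and ∫_0^1 r(v)·Σ_{i=1}^n (1−v)^i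 dv = 1. Suppose α_0,…,α_{j+1} ≥ 0 and ζ ∈ ℝ satisfy: α_0 ≥ (1−p̃)·α_1 + 1; α_k ≥ (1−p̃)·α_{k+1} + ((q−1)/q^k)·α_0 + p̃·Σ_{l=1}^{k−1} ((q−1)/q^{k−l})·α_l for k = 1,…,j−1; α_j ≥ ((q−1)/q^j)·α_0 + p̃·Σ_{l=1}^{j−1} ((q−1)/q^{j−l})·α_l; α_{j+1} ≥ (1/q^j)·α_0 + p̃·Σ_{l=1}^j (1/q^{j−l})·α_l; and for every v ∈ [0,1]: ζ·Σ_{i=1}^n (1−v)^i ≥ (α_0/β)·(ψ_fail(v) + Σ_{l=0}^j (a·q^l + ρ_l)·ψ_l(v)·1_{[0, β/q^l]}(v)) + (p̃/β)·Σ_{k=1}^j α_k·q^k·(Σ_{l=k}^j (a·q^l + ρ_l)·ψ_l(v)·1_{[0, β/q^l]}(v)). Then ζ ≥ d_0. -/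
/-!
Weak duality, in two steps. Multiply the primal constraint of row `0` by `α 0` and that of
row `k ≥ 1` by `α k`, add them up and regroup by primal variable: the dual constraints bound the
coefficient of each `d m` by `α m` (by `α 0 - 1` for `d 0`), while the coefficient of
`d (j+1) ≤ 0` is nonnegative. This leaves
`d 0 ≤ α 0 * (F + C̃(0)) + p̃ ∑ α k * C̃(k)` with `F = (1/β) ∫ r ψ_fail`. Each `C̃(k)` is
`(q^k/β) ∫₀¹ r · ∑_{l ≥ k} (a q^l + ρ_l) ψ_l 1_{[0, β/q^l]}`, so the right-hand side is
`∫₀¹ r · G` for the right-hand side `G` of the pointwise dual constraint, and `r ≥ 0` with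
`G ≤ ζ ∑ (1-v)^i` bounds it by `ζ ∫₀¹ r ∑ (1-v)^i = ζ`.
-/

open MeasureTheory Finset

/-- `ρ_l = l + 2 - a/q`. -/
noncomputable def rho (a q : ℝ) (l : ℕ) : ℝ := (l : ℝ) + 2 - a/q

/-- `ψ_l(v) = min{β(q-1)/q^{l+1}, β/q^l - v}` for `l < j`, and `ψ_j(v) = β/q^j - v`. -/
noncomputable def psi (j : ℕ) (q β : ℝ) (l : ℕ) (v : ℝ) : ℝ :=
  if l < j then min (β*(q - 1)/q^(l+1)) (β/q^l - v) else β/q^j - v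

/-- `ψ_fail(v) = min{1-β, 1-v}`. -/
noncomputable def psiFail (β : ℝ) (v : ℝ) : ℝ := min (1 - β) (1 - v)

/-- The cost upper bounds
`C̃(k) = (q^k/β) ∑_{l=k}^j (a q^l + ρ_l) ∫_0^{β/q^l} r(v) ψ_l(v) dv`. -/
noncomputable def Ctil (j : ℕ) (q β a : ℝ) (r : ℝ → ℝ) (k : ℕ) : ℝ :=
  q^k/β * ∑ l ∈ Finset.Icc k j,
    (a*q^l + rho a q l) * ∫ v in (0:ℝ)..(β/q^l), r v * psi j q β l v

theorem sum_Icc_sum_Icc_add_comm {M : Type*} [AddCommMonoid M] (j : ℕ) (f : ℕ → ℕ → M) :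
    ∑ k ∈ Icc 1 j, ∑ l ∈ Icc 1 (j - k), f k (k + l)
      = ∑ m ∈ Icc 1 j, ∑ k ∈ Icc 1 (m - 1), f k m := by
  have hshift : ∀ k ∈ Icc 1 j, ∑ l ∈ Icc 1 (j - k), f k (k + l) = ∑ m ∈ Icc (k + 1) j, f k m := by
    intro k hk
    rw [mem_Icc] at hk
    rw [← Nat.add_sub_cancel' hk.2, ← map_add_left_Icc, sum_map]
    simp only [Nat.add_sub_cancel' hk.2, addLeftEmbedding_apply]
  rw [sum_congr rfl hshift]
  exact sum_comm' fun k m => by simp only [mem_Icc]; omega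

theorem sum_Icc_add_one_pred {M : Type*} [AddCommMonoid M] (i : ℕ) (f : ℕ → ℕ → M) :
    ∑ k ∈ Icc 1 (i + 1), f k (k - 1) = f 1 0 + ∑ m ∈ Icc 1 i, f (m + 1) m := by
  rw [← map_add_right_Icc 0 i 1, sum_map, ← insert_Icc_add_one_left_eq_Icc (Nat.zero_le i),
    sum_insert (by simp)]
  simp

/-- The bracket multiplied by `p̃` in the primal constraint of row `k`. Row `0` is
`d 0 ≤ F + primalTail j q C d 0`, and for `k = j` the sum is empty, so that one shape covers
rows `1, …, j`. -/
noncomputable def primalTail (j : ℕ) (q : ℝ) (C d : ℕ → ℝ) (k : ℕ) : ℝ :=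
  C k + ∑ l ∈ Icc 1 (j - k), (q - 1) / q ^ l * d (k + l) + 1 / q ^ (j - k) * d (j + 1)

theorem sum_mul_primalTail (j : ℕ) (q : ℝ) (C d α : ℕ → ℝ) :
    ∑ k ∈ Icc 1 j, α k * primalTail j q C d k
      = ∑ k ∈ Icc 1 j, α k * C k
        + ∑ m ∈ Icc 1 j, (∑ k ∈ Icc 1 (m - 1), (q - 1) / q ^ (m - k) * α k) * d m
        + (∑ k ∈ Icc 1 j, α k * (1 / q ^ (j - k))) * d (j + 1) := by
  simp only [primalTail, mul_add, sum_add_distrib, mul_sum, sum_mul]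
  rw [← sum_Icc_sum_Icc_add_comm j fun k m => (q - 1) / q ^ (m - k) * α k * d m]
  congr 1
  · congr 1
    refine sum_congr rfl fun k _ => sum_congr rfl fun l _ => ?_
    rw [Nat.add_sub_cancel_left]
    ring
  · exact sum_congr rfl fun _ _ => by ring

theorem sum_mul_le_of_dual_feasible {i : ℕ} {q pt : ℝ} {d α : ℕ → ℝ}
    (hd : ∀ k ≤ i + 1, 0 ≤ d k)
    (hcol : ∀ k, 1 ≤ k → k ≤ i →
      α k ≥ (1 - pt) * α (k + 1) + (q - 1) / q ^ k * α 0
        + pt * ∑ l ∈ Icc 1 (k - 1), (q - 1) / q ^ (k - l) * α l)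
    (hcolj : α (i + 1) ≥ (q - 1) / q ^ (i + 1) * α 0
      + pt * ∑ l ∈ Icc 1 i, (q - 1) / q ^ (i + 1 - l) * α l) :
    α 0 * ∑ m ∈ Icc 1 (i + 1), (q - 1) / q ^ m * d m
      + (1 - pt) * ∑ m ∈ Icc 1 i, α (m + 1) * d m
      + pt * ∑ m ∈ Icc 1 (i + 1), (∑ k ∈ Icc 1 (m - 1), (q - 1) / q ^ (m - k) * α k) * d m
      ≤ ∑ m ∈ Icc 1 (i + 1), α m * d m := by
  have hmid : ∀ m ∈ Icc 1 i, α 0 * ((q - 1) / q ^ m * d m) + (1 - pt) * (α (m + 1) * d m)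
      + pt * ((∑ k ∈ Icc 1 (m - 1), (q - 1) / q ^ (m - k) * α k) * d m) ≤ α m * d m := by
    intro m hm
    rw [mem_Icc] at hm
    have := mul_le_mul_of_nonneg_right (hcol m hm.1 hm.2) (hd m (by omega))
    linarith
  have htop := mul_le_mul_of_nonneg_right hcolj (hd (i + 1) le_rfl)
  have hsum := sum_le_sum hmid
  simp only [sum_add_distrib, ← mul_sum] at hsum
  simp only [sum_Icc_succ_top (by omega : 1 ≤ i + 1), Nat.add_sub_cancel]
  linarith

theorem le_of_primal_dual_feasible {j : ℕ} (hj : 1 ≤ j) {q pt F : ℝ} (hq : 0 ≤ q)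
    (hpt : 0 ≤ pt) {C d α : ℕ → ℝ}
    (hd : ∀ k ≤ j, 0 ≤ d k) (hdj : d (j + 1) ≤ 0)
    (hrow0 : d 0 ≤ F + primalTail j q C d 0)
    (hrow : ∀ k ∈ Icc 1 j, d k ≤ (1 - pt) * d (k - 1) + pt * primalTail j q C d k)
    (hα : ∀ k ≤ j, 0 ≤ α k)
    (hcol0 : α 0 ≥ (1 - pt) * α 1 + 1)
    (hcol : ∀ k, 1 ≤ k → k ≤ j - 1 →
      α k ≥ (1 - pt) * α (k + 1) + (q - 1) / q ^ k * α 0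
        + pt * ∑ l ∈ Icc 1 (k - 1), (q - 1) / q ^ (k - l) * α l)
    (hcolj : α j ≥ (q - 1) / q ^ j * α 0 + pt * ∑ l ∈ Icc 1 (j - 1), (q - 1) / q ^ (j - l) * α l) :
    d 0 ≤ α 0 * (F + C 0) + pt * ∑ k ∈ Icc 1 j, α k * C k := by
  obtain ⟨i, rfl⟩ : ∃ i, j = i + 1 := ⟨j - 1, by omega⟩
  simp only [Nat.add_sub_cancel] at hcol hcolj
  have hrows : α 0 * d 0 + ∑ k ∈ Icc 1 (i + 1), α k * d k
      ≤ α 0 * (F + primalTail (i + 1) q C d 0)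
        + (1 - pt) * ∑ k ∈ Icc 1 (i + 1), α k * d (k - 1)
        + pt * ∑ k ∈ Icc 1 (i + 1), α k * primalTail (i + 1) q C d k := by
    rw [mul_sum, mul_sum, add_assoc, ← sum_add_distrib]
    gcongr with k hk
    · exact hα 0 (by omega)
    · calc α k * d k ≤ α k * ((1 - pt) * d (k - 1) + pt * primalTail (i + 1) q C d k) :=
            mul_le_mul_of_nonneg_left (hrow k hk) (hα k (mem_Icc.1 hk).2)
        _ = _ := by ring
  have htail0 : primalTail (i + 1) q C d 0 = C 0
      + ∑ m ∈ Icc 1 (i + 1), (q - 1) / q ^ m * d m + 1 / q ^ (i + 1) * d (i + 1 + 1) := by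
    simp [primalTail]
  have hlast : (α 0 * (1 / q ^ (i + 1)) + pt * ∑ k ∈ Icc 1 (i + 1), α k * (1 / q ^ (i + 1 - k)))
      * d (i + 1 + 1) ≤ 0 := by
    refine mul_nonpos_of_nonneg_of_nonpos (add_nonneg ?_ (mul_nonneg hpt (sum_nonneg ?_))) hdj
    · exact mul_nonneg (hα 0 (by omega)) (by positivity)
    · intro k hk
      exact mul_nonneg (hα k (mem_Icc.1 hk).2) (by positivity)
  have hcols := sum_mul_le_of_dual_feasible hd hcol hcolj
  have hcol0' := mul_le_mul_of_nonneg_right hcol0 (hd 0 (by omega))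
  rw [htail0, sum_mul_primalTail, sum_Icc_add_one_pred (f := fun k m => α k * d m)] at hrows
  linarith

theorem continuous_psi (j : ℕ) (q β : ℝ) (l : ℕ) : Continuous (psi j q β l) := by
  unfold psi
  split
  · exact continuous_const.min (continuous_const.sub continuous_id)
  · exact continuous_const.sub continuous_id

theorem continuous_psiFail (β : ℝ) : Continuous (psiFail β) :=
  continuous_const.min (continuous_const.sub continuous_id)

noncomputable def costDensity (j : ℕ) (q β a : ℝ) (l : ℕ) : ℝ → ℝ :=
  Set.indicator (Set.Icc 0 (β / q ^ l)) fun w => (a * q ^ l + rho a q l) * psi j q β l w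

noncomputable def dualRhs (j : ℕ) (q β a pt : ℝ) (α : ℕ → ℝ) (v : ℝ) : ℝ :=
  α 0 / β * (psiFail β v + ∑ l ∈ Icc 0 j, costDensity j q β a l v)
    + pt / β * ∑ k ∈ Icc 1 j, α k * q ^ k * ∑ l ∈ Icc k j, costDensity j q β a l v

section CostDensity

variable {j : ℕ} {q β a : ℝ} {r : ℝ → ℝ}

theorem mul_costDensity (l : ℕ) :
    (fun v => r v * costDensity j q β a l v) = Set.indicator (Set.Icc 0 (β / q ^ l))
      fun v => r v * ((a * q ^ l + rho a q l) * psi j q β l v) := by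
  ext v
  exact (Set.indicator_mul_right _ r _).symm

theorem intervalIntegrable_mul_costDensity (hr : IntegrableOn r (Set.Icc 0 1)) (l : ℕ) :
    IntervalIntegrable (fun v => r v * costDensity j q β a l v) volume 0 1 := by
  rw [mul_costDensity, intervalIntegrable_iff_integrableOn_Icc_of_le zero_le_one]
  exact (hr.mul_continuousOn (continuous_const.mul (continuous_psi j q β l)).continuousOn
    isCompact_Icc).indicator measurableSet_Icc

theorem integral_mul_costDensity {l : ℕ} (hl : β / q ^ l ∈ Set.Icc 0 1) :
    ∫ v in (0 : ℝ)..1, r v * costDensity j q β a l v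
      = (a * q ^ l + rho a q l) * ∫ v in (0 : ℝ)..(β / q ^ l), r v * psi j q β l v := by
  set g := fun v => r v * ((a * q ^ l + rho a q l) * psi j q β l v)
  have hcongr : Set.EqOn (Set.indicator (Set.Icc 0 (β / q ^ l)) g)
      (Set.indicator {v | v ≤ β / q ^ l} g) (Set.uIcc 0 1) := by
    intro v hv
    rw [Set.uIcc_of_le zero_le_one] at hv
    simp only [Set.indicator_apply, Set.mem_Icc, Set.mem_ofPred_eq, hv.1, true_and]
  rw [mul_costDensity, intervalIntegral.integral_congr hcongr,
    intervalIntegral.integral_indicator hl, ← intervalIntegral.integral_const_mul]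
  exact intervalIntegral.integral_congr fun v _ => by simp only [g]; ring

theorem intervalIntegrable_mul_sum_costDensity (hr : IntegrableOn r (Set.Icc 0 1)) (s : Finset ℕ) :
    IntervalIntegrable (fun v => r v * ∑ l ∈ s, costDensity j q β a l v) volume 0 1 := by
  simpa only [mul_sum, sum_fn] using
    IntervalIntegrable.sum s fun l _ => intervalIntegrable_mul_costDensity hr l

theorem Ctil_eq_integral (hr : IntegrableOn r (Set.Icc 0 1))
    (hb : ∀ l, β / q ^ l ∈ Set.Icc 0 1) (k : ℕ) :
    Ctil j q β a r k
      = q ^ k / β * ∫ v in (0 : ℝ)..1, r v * ∑ l ∈ Icc k j, costDensity j q β a l v := by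
  simp only [mul_sum]
  rw [intervalIntegral.integral_finsetSum fun l _ => intervalIntegrable_mul_costDensity hr l]
  simp only [integral_mul_costDensity (hb _), Ctil]

end CostDensity

theorem div_pow_mem_Icc {q β : ℝ} (hq : 1 ≤ q) (hβ0 : 0 ≤ β) (hβ1 : β ≤ 1) (l : ℕ) :
    β / q ^ l ∈ Set.Icc 0 1 :=
  ⟨by positivity, div_le_one_of_le₀ (hβ1.trans (one_le_pow₀ hq)) (by positivity)⟩

theorem intervalIntegrable_mul_of_continuous {r g : ℝ → ℝ} (hr : IntegrableOn r (Set.Icc 0 1))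
    (hg : Continuous g) : IntervalIntegrable (fun v => r v * g v) volume 0 1 :=
  ((intervalIntegrable_iff_integrableOn_Icc_of_le zero_le_one).2 hr).mul_continuousOn
    hg.continuousOn

section DualRhs

variable {j : ℕ} {q β a pt : ℝ} {α : ℕ → ℝ} {r : ℝ → ℝ}

theorem mul_dualRhs (v : ℝ) :
    r v * dualRhs j q β a pt α v = α 0 / β * (r v * psiFail β v)
      + α 0 / β * (r v * ∑ l ∈ Icc 0 j, costDensity j q β a l v)
      + ∑ k ∈ Icc 1 j, pt / β * α k * q ^ k * (r v * ∑ l ∈ Icc k j, costDensity j q β a l v) := by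
  have hsum : r v * (pt / β * ∑ k ∈ Icc 1 j, α k * q ^ k * ∑ l ∈ Icc k j, costDensity j q β a l v)
      = ∑ k ∈ Icc 1 j, pt / β * α k * q ^ k * (r v * ∑ l ∈ Icc k j, costDensity j q β a l v) := by
    rw [mul_sum, mul_sum]
    exact sum_congr rfl fun k _ => by ring
  rw [dualRhs, ← hsum]
  ring

theorem intervalIntegrable_sum_mul_sum_costDensity (hr : IntegrableOn r (Set.Icc 0 1))
    (c : ℕ → ℝ) :
    IntervalIntegrable (fun v => ∑ k ∈ Icc 1 j, c k * (r v * ∑ l ∈ Icc k j,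
      costDensity j q β a l v)) volume 0 1 := by
  simpa only [sum_fn] using IntervalIntegrable.sum (Icc 1 j) fun k _ =>
    (intervalIntegrable_mul_sum_costDensity hr (Icc k j)).const_mul (c k)

theorem intervalIntegrable_mul_dualRhs (hr : IntegrableOn r (Set.Icc 0 1)) :
    IntervalIntegrable (fun v => r v * dualRhs j q β a pt α v) volume 0 1 := by
  simp only [mul_dualRhs]
  exact ((intervalIntegrable_mul_of_continuous hr (continuous_psiFail β)).const_mul _ |>.add
    ((intervalIntegrable_mul_sum_costDensity hr _).const_mul _)).add
    (intervalIntegrable_sum_mul_sum_costDensity hr _)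

theorem integral_mul_dualRhs (hr : IntegrableOn r (Set.Icc 0 1))
    (hb : ∀ l, β / q ^ l ∈ Set.Icc 0 1) :
    ∫ v in (0 : ℝ)..1, r v * dualRhs j q β a pt α v
      = α 0 * (1 / β * (∫ v in (0 : ℝ)..1, r v * psiFail β v) + Ctil j q β a r 0)
        + pt * ∑ k ∈ Icc 1 j, α k * Ctil j q β a r k := by
  have hF := (intervalIntegrable_mul_of_continuous hr (continuous_psiFail β)).const_mul (α 0 / β)
  have hP := (intervalIntegrable_mul_sum_costDensity (j := j) (q := q) (β := β) (a := a)
    hr (Icc 0 j)).const_mul (α 0 / β)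
  simp only [mul_dualRhs]
  rw [intervalIntegral.integral_add (hF.add hP)
      (intervalIntegrable_sum_mul_sum_costDensity hr fun k => pt / β * α k * q ^ k),
    intervalIntegral.integral_add hF hP,
    intervalIntegral.integral_finsetSum fun k _ =>
      (intervalIntegrable_mul_sum_costDensity hr (Icc k j)).const_mul _]
  simp only [intervalIntegral.integral_const_mul, Ctil_eq_integral hr hb, pow_zero]
  congr 1
  · ring
  · rw [mul_sum]
    exact sum_congr rfl fun k _ => by ring

end DualRhs

theorem stmt_9_general
    (n : ℕ) (j : ℕ) (hj : 2 ≤ j)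
    (q a β pt : ℝ) (hq : 1 < q) (hβ0 : 0 < β) (hβ1 : β < 1)
    (hpt0 : 0 < pt)
    (r : ℝ → ℝ) (hr0 : ∀ v ∈ Set.Icc (0:ℝ) 1, 0 ≤ r v)
    (hrint : IntegrableOn r (Set.Icc 0 1))
    (d : ℕ → ℝ) (hd0 : ∀ k ≤ j + 1, 0 ≤ d k)
    (hp1 : d 0 ≤ (1/β) * (∫ v in (0:ℝ)..1, r v * psiFail β v) + Ctil j q β a r 0
        + (∑ l ∈ Finset.Icc 1 j, (q - 1)/q^l * d l) + (1/q^j) * d (j+1))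
    (hp2 : ∀ k, 1 ≤ k → k ≤ j - 1 →
      d k ≤ (1 - pt) * d (k-1)
        + pt * (Ctil j q β a r k + (∑ l ∈ Finset.Icc 1 (j-k), (q - 1)/q^l * d (k+l))
            + (1/q^(j-k)) * d (j+1)))
    (hp3 : d j ≤ (1 - pt) * d (j-1) + pt * (Ctil j q β a r j + d (j+1)))
    (hp4 : d (j+1) ≤ 0)
    (hp5 : (∫ v in (0:ℝ)..1, r v * ∑ i ∈ Finset.range n, (1-v)^(i+1)) = 1)
    (α : ℕ → ℝ) (hαpos : ∀ k ≤ j + 1, 0 ≤ α k) (ζ : ℝ)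
    (hd1 : α 0 ≥ (1 - pt) * α 1 + 1)
    (hd2 : ∀ k, 1 ≤ k → k ≤ j - 1 →
      α k ≥ (1 - pt) * α (k+1) + (q - 1)/q^k * α 0
        + pt * ∑ l ∈ Finset.Icc 1 (k-1), (q - 1)/q^(k-l) * α l)
    (hd3 : α j ≥ (q - 1)/q^j * α 0 + pt * ∑ l ∈ Finset.Icc 1 (j-1), (q - 1)/q^(j-l) * α l)
    (hd5 : ∀ v ∈ Set.Icc (0:ℝ) 1,
      ζ * ∑ i ∈ Finset.range n, (1-v)^(i+1)
        ≥ α 0 / β * (psiFail β v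
              + ∑ l ∈ Finset.Icc 0 j, Set.indicator (Set.Icc (0:ℝ) (β/q^l))
                  (fun w => (a*q^l + rho a q l) * psi j q β l w) v)
          + pt/β * ∑ k ∈ Finset.Icc 1 j, α k * q^k *
              (∑ l ∈ Finset.Icc k j, Set.indicator (Set.Icc (0:ℝ) (β/q^l))
                  (fun w => (a*q^l + rho a q l) * psi j q β l w) v)) :
    ζ ≥ d 0 := by
  have hrow0 : d 0 ≤ 1 / β * (∫ v in (0:ℝ)..1, r v * psiFail β v)
      + primalTail j q (Ctil j q β a r) d 0 := by
    simp only [primalTail, Nat.sub_zero, zero_add]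
    linarith
  have hrow : ∀ k ∈ Icc 1 j,
      d k ≤ (1 - pt) * d (k - 1) + pt * primalTail j q (Ctil j q β a r) d k := by
    intro k hk
    rw [mem_Icc] at hk
    rcases hk.2.lt_or_eq with hlt | rfl
    · exact hp2 k hk.1 (by omega)
    · simpa [primalTail] using hp3
  have hS : Continuous fun v : ℝ => ζ * ∑ i ∈ Finset.range n, (1 - v) ^ (i + 1) := by fun_prop
  calc d 0 ≤ α 0 * (1 / β * (∫ v in (0:ℝ)..1, r v * psiFail β v) + Ctil j q β a r 0)
        + pt * ∑ k ∈ Icc 1 j, α k * Ctil j q β a r k :=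
      le_of_primal_dual_feasible (by omega) (by linarith) hpt0.le (fun k hk => hd0 k (by omega))
        hp4 hrow0 hrow (fun k hk => hαpos k (by omega)) hd1 hd2 hd3
    _ = ∫ v in (0:ℝ)..1, r v * dualRhs j q β a pt α v :=
      (integral_mul_dualRhs hrint (div_pow_mem_Icc hq.le hβ0.le hβ1.le)).symm
    _ ≤ ∫ v in (0:ℝ)..1, r v * (ζ * ∑ i ∈ Finset.range n, (1 - v) ^ (i + 1)) :=
      intervalIntegral.integral_mono_on zero_le_one (intervalIntegrable_mul_dualRhs hrint)
        (intervalIntegrable_mul_of_continuous hrint hS)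
        fun v hv => mul_le_mul_of_nonneg_left (hd5 v hv) (hr0 v hv)
    _ = ζ := by
      simp only [mul_left_comm (r _) ζ]
      rw [intervalIntegral.integral_const_mul, hp5, mul_one]

/-- Weak duality between the infinite-dimensional primal program
`(LP)_UB` and its dual `(DLP)_UB`: any dual-feasible `ζ` dominates any primal-feasible
value `d_0`. -/
theorem stmt_9
    (n : ℕ) (hn : 1 ≤ n) (j : ℕ) (hj : 2 ≤ j)
    (q a β pt : ℝ) (hq : 1 < q) (ha : 0 < a) (hβ0 : 0 < β) (hβ1 : β < 1)
    (hpt0 : 0 < pt) (hpt1 : pt < 1)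
    (r : ℝ → ℝ) (hr0 : ∀ v ∈ Set.Icc (0:ℝ) 1, 0 ≤ r v)
    (hrint : IntegrableOn r (Set.Icc 0 1))
    (d : ℕ → ℝ) (hd0 : ∀ k ≤ j + 1, 0 ≤ d k)
    (hp1 : d 0 ≤ (1/β) * (∫ v in (0:ℝ)..1, r v * psiFail β v) + Ctil j q β a r 0
        + (∑ l ∈ Finset.Icc 1 j, (q - 1)/q^l * d l) + (1/q^j) * d (j+1))
    (hp2 : ∀ k, 1 ≤ k → k ≤ j - 1 →
      d k ≤ (1 - pt) * d (k-1)
        + pt * (Ctil j q β a r k + (∑ l ∈ Finset.Icc 1 (j-k), (q - 1)/q^l * d (k+l))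
            + (1/q^(j-k)) * d (j+1)))
    (hp3 : d j ≤ (1 - pt) * d (j-1) + pt * (Ctil j q β a r j + d (j+1)))
    (hp4 : d (j+1) ≤ 0)
    (hp5 : (∫ v in (0:ℝ)..1, r v * ∑ i ∈ Finset.range n, (1-v)^(i+1)) = 1)
    (α : ℕ → ℝ) (hαpos : ∀ k ≤ j + 1, 0 ≤ α k) (ζ : ℝ)
    (hd1 : α 0 ≥ (1 - pt) * α 1 + 1)
    (hd2 : ∀ k, 1 ≤ k → k ≤ j - 1 →
      α k ≥ (1 - pt) * α (k+1) + (q - 1)/q^k * α 0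
        + pt * ∑ l ∈ Finset.Icc 1 (k-1), (q - 1)/q^(k-l) * α l)
    (hd3 : α j ≥ (q - 1)/q^j * α 0 + pt * ∑ l ∈ Finset.Icc 1 (j-1), (q - 1)/q^(j-l) * α l)
    (hd4 : α (j+1) ≥ (1/q^j) * α 0 + pt * ∑ l ∈ Finset.Icc 1 j, (1/q^(j-l)) * α l)
    (hd5 : ∀ v ∈ Set.Icc (0:ℝ) 1,
      ζ * ∑ i ∈ Finset.range n, (1-v)^(i+1)
        ≥ α 0 / β * (psiFail β v
              + ∑ l ∈ Finset.Icc 0 j, Set.indicator (Set.Icc (0:ℝ) (β/q^l))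
                  (fun w => (a*q^l + rho a q l) * psi j q β l w) v)
          + pt/β * ∑ k ∈ Finset.Icc 1 j, α k * q^k *
              (∑ l ∈ Finset.Icc k j, Set.indicator (Set.Icc (0:ℝ) (β/q^l))
                  (fun w => (a*q^l + rho a q l) * psi j q β l w) v)) :
    ζ ≥ d 0 :=
  stmt_9_general n j hj q a β pt hq hβ0 hβ1 hpt0 r hr0 hrint d hd0 hp1 hp2 hp3 hp4 hp5 α hαpos ζ hd1
    hd2 hd3 hd5
end

section
/- Let j ≥ 2 be an integer, q > 1, and p̃ ∈ ((q−1)/(2q−1), 1). Set E = (2q−1)·p̃ − (q−1) and θ = (q−1)/E. Then the values α_0 = θ·q·p̃/(q−1) and α_k = θ for k = 1,…,j are nonnegative and satisfy: α_0 ≥ (1−p̃)·α_1 + 1; α_k ≥ (1−p̃)·α_{k+1} + ((q−1)/q^k)·α_0 + p̃·Σ_{l=1}^{k−1} ((q−1)/q^{k−l})·α_l for k = 1,…,j−1; and α_j ≥ ((q−1)/q^j)·α_0 + p̃·Σ_{l=1}^{j−1} ((q−1)/q^{j−l})·α_l. -/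
/-!
With `α_l = θ` for `l ≥ 1`, the weighted sum `Σ_{l=1}^{k-1} (q-1)/q^{k-l}` telescopes to `1 - q^{1-k}`,
and the choice `α_0 = θ q p̃/(q-1)` makes the `α_0`-term supply exactly the missing `p̃ θ q^{1-k}`.
So the inflow into every state `k ≥ 1` is `p̃ θ`, and constraints (28) hold with equality,
(29) reduces to `p̃ θ ≤ θ`, and (27) is the identity `q p̃ = (1 - p̃)(q - 1) + E`.
-/

open Finset

lemma sum_Icc_sub_one_div_pow {q : ℝ} (hq : q ≠ 0) {k : ℕ} (hk : 1 ≤ k) :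
    ∑ l ∈ Icc 1 (k - 1), (q - 1) / q ^ (k - l) = 1 - q / q ^ k := by
  have hterm : ∀ l ∈ Ico 1 k, (q - 1) / q ^ (k - l) = q ^ l * (q - 1) / q ^ k := by
    intro l hl
    rw [pow_sub₀ q hq (mem_Ico.mp hl).2.le]
    field_simp
  rw [Icc_sub_one_right_eq_Ico_of_not_isMin (by rw [isMin_iff_eq_bot, Nat.bot_eq_zero]; omega),
    sum_congr rfl hterm, ← sum_div, ← sum_mul, geom_sum_Ico_mul q hk, pow_one, sub_div,
    div_self (pow_ne_zero k hq)]

lemma inflow_eq_of_const {q pt θ : ℝ} {α : ℕ → ℝ} (hq0 : q ≠ 0) (hq1 : q ≠ 1)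
    (hα0 : α 0 = θ * q * pt / (q - 1)) {k : ℕ} (hk : 1 ≤ k)
    (hα : ∀ l ∈ Icc 1 (k - 1), α l = θ) :
    (q - 1) / q ^ k * α 0 + pt * ∑ l ∈ Icc 1 (k - 1), (q - 1) / q ^ (k - l) * α l = pt * θ := by
  have hq1' : q - 1 ≠ 0 := sub_ne_zero.mpr hq1
  rw [sum_congr rfl fun l hl => by rw [hα l hl], ← sum_mul, sum_Icc_sub_one_div_pow hq0 hk, hα0]
  field_simp
  ring

/-- The values `α_0 = θ q p̃/(q-1)` and `α_k = θ` for `k = 1, …, j`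
are nonnegative and satisfy the dual constraints of `(DLP)_UB`. -/
theorem stmt_10
    (j : ℕ) (hj : 2 ≤ j) (q pt : ℝ) (hq : 1 < q)
    (hptlb : (q - 1)/(2*q - 1) < pt) (hpt1 : pt < 1)
    (E θ : ℝ)
    (hE : E = (2*q - 1)*pt - (q - 1))
    (hθ : θ = (q - 1)/E)
    (α : ℕ → ℝ)
    (hα0 : α 0 = θ * q * pt / (q - 1))
    (hαk : ∀ k, 1 ≤ k → k ≤ j → α k = θ) :
    (∀ k ≤ j, 0 ≤ α k) ∧
    α 0 ≥ (1 - pt) * α 1 + 1 ∧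
    (∀ k, 1 ≤ k → k ≤ j - 1 →
      α k ≥ (1 - pt) * α (k+1) + (q - 1)/q^k * α 0
        + pt * ∑ l ∈ Finset.Icc 1 (k-1), (q - 1)/q^(k-l) * α l) ∧
    α j ≥ (q - 1)/q^j * α 0 + pt * ∑ l ∈ Finset.Icc 1 (j-1), (q - 1)/q^(j-l) * α l := by
  have hq1 : 0 < q - 1 := by linarith
  have hpt0 : 0 < pt := (div_pos hq1 (by linarith)).trans hptlb
  have hE0 : 0 < E := by
    rw [hE]
    linarith [(div_lt_iff₀ (by linarith : (0 : ℝ) < 2 * q - 1)).mp hptlb]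
  have hθ0 : 0 < θ := hθ ▸ div_pos hq1 hE0
  have inflow : ∀ k, 1 ≤ k → k ≤ j →
      (q - 1) / q ^ k * α 0 + pt * ∑ l ∈ Icc 1 (k - 1), (q - 1) / q ^ (k - l) * α l = pt * θ :=
    fun k hk hkj => inflow_eq_of_const (by positivity) hq.ne' hα0 hk
      fun l hl => hαk l (mem_Icc.mp hl).1 (by have := (mem_Icc.mp hl).2; omega)
  refine ⟨fun k hk => ?_, ?_, fun k hk hkj => ?_, ?_⟩
  · rcases Nat.eq_zero_or_pos k with rfl | hk0
    · rw [hα0]; positivity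
    · rw [hαk k hk0 hk]; exact hθ0.le
  · rw [hα0, hαk 1 le_rfl (by omega), hθ]
    refine le_of_eq ?_
    field_simp
    linear_combination hE
  · rw [add_assoc, inflow k hk (by omega), hαk k hk (by omega), hαk (k + 1) (by omega) (by omega)]
    linarith
  · rw [inflow j (by omega) le_rfl, hαk j (by omega) le_rfl]
    nlinarith
end
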